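/- arXiv:1910.07432 — 5 statements merged into one kernel-verified Lean document; each statement's English description precedes it below -/
import Mathlib

section
/- Let N be a positive integer, σ² > 0, and 0 < ω ≤ π. Define S_N(ω) = (1/N) Σ_{ℓ=1}^N Σ_{m=1}^N σ² · min(ℓ,m) · cos(ω(ℓ−m)). Then S_N(ω) = ((2N+1)/(4N)) · (σ²/sin²(ω/2)) · (1 − (1/(2N+1)) · sin((N+1/2)ω)/sin(ω/2)). -/
/-!
Writing `min ℓ m = #{k ∈ [1, N] | k ≤ ℓ, k ≤ m}` splits the double sum into `N` sums over the
square windows `[k, N]²`. Since `cos (ω (ℓ - m))` only depends on `ℓ - m`, each window of side `n`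
contributes `∑_{i,j < n} cos (ω (i - j)) = |∑_{i < n} e^{iωi}|² = sin² (nω/2) / sin² (ω/2)`
(a Fejér kernel, by the geometric sum). Finally
`∑_{n=1}^N sin² (nω/2) = (N - ∑_{n=1}^N cos (nω)) / 2`, and the Dirichlet sum
`∑_{n=1}^N cos (nω)` telescopes against `2 sin (ω/2)`.
-/

open Finset Real

theorem sum_Icc_sum_Icc_min_smul {M : Type*} [AddCommMonoid M] (N : ℕ) (g : ℕ → ℕ → M) :
    ∑ ℓ ∈ Icc 1 N, ∑ m ∈ Icc 1 N, min ℓ m • g ℓ m =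
      ∑ k ∈ Icc 1 N, ∑ ℓ ∈ Icc k N, ∑ m ∈ Icc k N, g ℓ m := by
  calc _ = ∑ ℓ ∈ Icc 1 N, ∑ m ∈ Icc 1 N, ∑ _k ∈ Icc 1 (min ℓ m), g ℓ m := by
        simp only [sum_const, Nat.card_Icc, add_tsub_cancel_right]
    _ = ∑ ℓ ∈ Icc 1 N, ∑ k ∈ Icc 1 ℓ, ∑ m ∈ Icc k N, g ℓ m :=
        sum_congr rfl fun ℓ hℓ => sum_comm' fun m k => by simp only [mem_Icc] at hℓ ⊢; omega
    _ = _ := sum_comm' fun ℓ k => by simp only [mem_Icc]; omega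

theorem sum_Icc_sum_Icc_sub {M : Type*} [AddCommMonoid M] (f : ℝ → M) (k N : ℕ) :
    ∑ ℓ ∈ Icc k N, ∑ m ∈ Icc k N, f ((ℓ : ℝ) - m) =
      ∑ i ∈ range (N + 1 - k), ∑ j ∈ range (N + 1 - k), f ((i : ℝ) - j) := by
  simp only [← Ico_add_one_right_eq_Icc, sum_Ico_eq_sum_range, Nat.cast_add,
    add_sub_add_left_eq_sub]

theorem sum_Icc_one_reflect {M : Type*} [AddCommMonoid M] (f : ℕ → M) (N : ℕ) :
    ∑ k ∈ Icc 1 N, f (N + 1 - k) = ∑ n ∈ Icc 1 N, f n := by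
  simpa only [← Ico_add_one_right_eq_Icc, Nat.add_sub_cancel_left,
    show N + 1 + 1 - 1 = N + 1 by omega] using sum_Ico_reflect f 1 (Nat.le_succ (N + 1))

open ComplexConjugate in
theorem sum_sum_cos_sub_eq_norm_sq {ι : Type*} (s : Finset ι) (x : ι → ℝ) :
    ∑ i ∈ s, ∑ j ∈ s, cos (x i - x j) = ‖∑ i ∈ s, Complex.exp (x i * Complex.I)‖ ^ 2 := by
  have hcos : ∀ i j, cos (x i - x j) =
      (Complex.exp (x i * Complex.I) * conj (Complex.exp (x j * Complex.I))).re := by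
    intro i j
    rw [← Complex.exp_conj, map_mul, Complex.conj_ofReal, Complex.conj_I, ← Complex.exp_add,
      ← Complex.exp_ofReal_mul_I_re]
    push_cast
    ring_nf
  simp_rw [hcos, ← Complex.re_sum, ← mul_sum, ← sum_mul, ← map_sum, Complex.mul_conj']
  norm_cast

theorem sin_sq_mul_sum_range_sum_range_cos (ω : ℝ) (n : ℕ) :
    sin (ω / 2) ^ 2 * ∑ i ∈ range n, ∑ j ∈ range n, cos (ω * ((i : ℝ) - j)) =
      sin (n * ω / 2) ^ 2 := by
  set z := Complex.exp (Complex.I * ω)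
  have hgeom : (∑ i ∈ range n, Complex.exp ((ω * i : ℝ) * Complex.I)) * (z - 1) =
      Complex.exp (Complex.I * (n * ω : ℝ)) - 1 := by
    calc _ = (∑ i ∈ range n, z ^ i) * (z - 1) := by
          congr 1
          refine sum_congr rfl fun i _ => ?_
          rw [← Complex.exp_nat_mul]
          push_cast
          ring_nf
      _ = z ^ n - 1 := geom_sum_mul z n
      _ = _ := by
          rw [← Complex.exp_nat_mul]
          push_cast
          ring_nf
  have hnorm := congrArg (‖·‖ ^ 2) hgeom
  simp only [z, norm_mul, mul_pow, Complex.norm_exp_I_mul_ofReal_sub_one, Real.norm_eq_abs,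
    sq_abs] at hnorm
  simp_rw [mul_sub, sum_sum_cos_sub_eq_norm_sq]
  linear_combination hnorm / 4

theorem sin_sq_mul_sum_Icc_sum_Icc_min_mul_cos (ω : ℝ) (N : ℕ) :
    sin (ω / 2) ^ 2 *
        ∑ ℓ ∈ Icc 1 N, ∑ m ∈ Icc 1 N, ((min ℓ m : ℕ) : ℝ) * cos (ω * ((ℓ : ℝ) - m)) =
      ∑ n ∈ Icc 1 N, sin (n * ω / 2) ^ 2 := by
  have hmin := sum_Icc_sum_Icc_min_smul N fun ℓ m => cos (ω * ((ℓ : ℝ) - m))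
  simp only [nsmul_eq_mul] at hmin
  simp_rw [hmin, sum_Icc_sum_Icc_sub fun t => cos (ω * t)]
  rw [sum_Icc_one_reflect fun n => ∑ i ∈ range n, ∑ j ∈ range n, cos (ω * ((i : ℝ) - j)),
    mul_sum]
  simp_rw [sin_sq_mul_sum_range_sum_range_cos]

theorem two_mul_sin_mul_sum_Icc_cos (ω : ℝ) (N : ℕ) :
    2 * sin (ω / 2) * ∑ n ∈ Icc 1 N, cos (n * ω) = sin ((N + 1 / 2) * ω) - sin (ω / 2) := by
  induction N with
  | zero => simp [div_eq_inv_mul]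
  | succ N ih =>
    have hstep := sin_sub_sin ((N + 1 + 1 / 2) * ω) ((N + 1 / 2) * ω)
    rw [show ((N + 1 + 1 / 2) * ω - (N + 1 / 2) * ω) / 2 = ω / 2 by ring,
      show ((N + 1 + 1 / 2) * ω + (N + 1 / 2) * ω) / 2 = (N + 1) * ω by ring] at hstep
    rw [sum_Icc_succ_top (by omega), mul_add, ih]
    push_cast
    linarith

theorem sum_Icc_sin_sq_half (ω : ℝ) (N : ℕ) :
    ∑ n ∈ Icc 1 N, sin (n * ω / 2) ^ 2 = (N - ∑ n ∈ Icc 1 N, cos (n * ω)) / 2 := by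
  have hsq (n : ℕ) : sin (n * ω / 2) ^ 2 = (1 - cos (n * ω)) / 2 := by
    rw [sin_sq_eq_half_sub]
    ring_nf
  simp_rw [hsq, ← sum_div, sum_sub_distrib, sum_const, Nat.card_Icc, add_tsub_cancel_right,
    nsmul_one]

theorem power_spectrum_uncorrelated_closed_form_general
    (N : ℕ) (σ2 : ℝ)
    (ω : ℝ) (hω0 : 0 < ω) (hωπ : ω ≤ π) :
    (1 / N) * ∑ ℓ ∈ Icc 1 N, ∑ m ∈ Icc 1 N,
        σ2 * ((min ℓ m : ℕ) : ℝ) * Real.cos (ω * ((ℓ : ℝ) - (m : ℝ))) =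
      ((2 * N + 1) / (4 * N)) * (σ2 / Real.sin (ω / 2) ^ 2) *
        (1 - (1 / (2 * N + 1)) * (Real.sin ((N + 1 / 2) * ω) / Real.sin (ω / 2))) := by
  have hs : sin (ω / 2) ≠ 0 := (sin_pos_of_pos_of_lt_pi (by linarith) (by linarith)).ne'
  have hspectrum : ∑ ℓ ∈ Icc 1 N, ∑ m ∈ Icc 1 N, ((min ℓ m : ℕ) : ℝ) * cos (ω * ((ℓ : ℝ) - m)) =
      (N - ∑ n ∈ Icc 1 N, cos (n * ω)) / 2 / sin (ω / 2) ^ 2 :=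
    eq_div_of_mul_eq (pow_ne_zero 2 hs) <| by
      rw [mul_comm, sin_sq_mul_sum_Icc_sum_Icc_min_mul_cos, sum_Icc_sin_sq_half]
  have hdirichlet : ∑ n ∈ Icc 1 N, cos (n * ω) =
      (sin ((N + 1 / 2) * ω) - sin (ω / 2)) / (2 * sin (ω / 2)) :=
    eq_div_of_mul_eq (mul_ne_zero two_ne_zero hs) <| by
      rw [mul_comm, two_mul_sin_mul_sum_Icc_cos]
  simp_rw [mul_assoc σ2, ← mul_sum]
  rw [hspectrum, hdirichlet]
  field_simp
  ring

/-- Closed-form evaluation of the power spectrum for sequences with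
uncorrelated unit-mean level spacings of variance `σ²`. -/
theorem power_spectrum_uncorrelated_closed_form
    (N : ℕ) (hN : 1 ≤ N) (σ2 : ℝ) (hσ2 : 0 < σ2)
    (ω : ℝ) (hω0 : 0 < ω) (hωπ : ω ≤ π) :
    (1 / N) * ∑ ℓ ∈ Icc 1 N, ∑ m ∈ Icc 1 N,
        σ2 * ((min ℓ m : ℕ) : ℝ) * Real.cos (ω * ((ℓ : ℝ) - (m : ℝ))) =
      ((2 * N + 1) / (4 * N)) * (σ2 / Real.sin (ω / 2) ^ 2) *
        (1 - (1 / (2 * N + 1)) * (Real.sin ((N + 1 / 2) * ω) / Real.sin (ω / 2))) :=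
  power_spectrum_uncorrelated_closed_form_general N σ2 ω hω0 hωπ
end

section
/- For fixed Ω > 0 and σ² > 0, the limit as N → ∞ of ω² S_N(ω) evaluated at ω = Ω/N equals 2σ²(1 − sin(Ω)/Ω), where S_N(ω) = ((2N+1)/(4N))(σ²/sin²(ω/2))(1 − (1/(2N+1)) sin((N+1/2)ω)/sin(ω/2)). -/
open Real Filter

/-- Infrared double-scaling limit of the exact power spectrum: for fixed
`Ω > 0`, `ω² S_N(ω)` at `ω = Ω/N` tends to `2σ²(1 - sin Ω / Ω)` as `N → ∞`. -/
theorem power_spectrum_infrared_scaling_limit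
    (Ω : ℝ) (hΩ : 0 < Ω) (σ2 : ℝ) (hσ2 : 0 < σ2)
    (S : ℕ → ℝ → ℝ)
    (hS : ∀ (N : ℕ) (ω : ℝ), S N ω =
      ((2 * N + 1) / (4 * N)) * (σ2 / Real.sin (ω / 2) ^ 2) *
        (1 - (1 / (2 * N + 1)) * (Real.sin ((N + 1 / 2) * ω) / Real.sin (ω / 2)))) :
    Tendsto (fun N : ℕ => (Ω / N) ^ 2 * S N (Ω / N)) atTop
      (nhds (2 * σ2 * (1 - Real.sin Ω / Ω))) := by
  set t : ℕ → ℝ := fun N => Ω / (2 * N) with ht_def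
  have htN : Tendsto t atTop (nhds 0) := by
    have h := tendsto_const_div_atTop_nhds_zero_nat (Ω / 2)
    refine h.congr (fun N => ?_)
    simp [ht_def, div_div]
  have htpos : ∀ᶠ N : ℕ in atTop, 0 < t N := by
    filter_upwards [eventually_ge_atTop 1] with N hN
    have hN0 : (0:ℝ) < N := by exact_mod_cast Nat.pos_of_ne_zero (by omega)
    simp only [ht_def]
    positivity
  have htlt : ∀ᶠ N : ℕ in atTop, t N < π := htN.eventually_lt_const pi_pos
  have hsinpos : ∀ᶠ N : ℕ in atTop, 0 < Real.sin (t N) := by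
    filter_upwards [htpos, htlt] with N h1 h2
    exact Real.sin_pos_of_pos_of_lt_pi h1 h2
  have htN' : Tendsto t atTop (nhdsWithin 0 {x | x ≠ 0}) := by
    refine tendsto_nhdsWithin_of_tendsto_nhds_of_eventually_within _ htN ?_
    filter_upwards [htpos] with N h
    exact h.ne'
  have hslope : Tendsto (fun x : ℝ => Real.sin x / x) (nhdsWithin 0 {x | x ≠ 0}) (nhds 1) := by
    have hderiv := Real.hasDerivAt_sin 0
    rw [Real.cos_zero] at hderiv
    have h1 := hasDerivAt_iff_tendsto_slope.mp hderiv
    refine h1.congr (fun x => ?_)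
    simp [slope_def_field]
  have hq : Tendsto (fun N : ℕ => Real.sin (t N) / t N) atTop (nhds 1) :=
    hslope.comp htN'
  have h1N : Tendsto (fun N : ℕ => (1:ℝ) / N) atTop (nhds 0) :=
    tendsto_one_div_atTop_nhds_zero_nat
  have hA : Tendsto (fun N : ℕ => σ2 * ((2 + 1 / (N:ℝ)) / 4)) atTop
      (nhds (σ2 * ((2 + 0) / 4))) :=
    tendsto_const_nhds.mul ((tendsto_const_nhds.add h1N).div_const 4)
  have hB : Tendsto (fun N : ℕ => (2 / (Real.sin (t N) / t N)) ^ 2) atTop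
      (nhds ((2 / 1) ^ 2)) :=
    (tendsto_const_nhds.div hq one_ne_zero).pow 2
  have hΩt : Tendsto (fun N : ℕ => Ω + t N) atTop (nhds (Ω + 0)) :=
    tendsto_const_nhds.add htN
  have hsin : Tendsto (fun N : ℕ => Real.sin (Ω + t N)) atTop (nhds (Real.sin (Ω + 0))) :=
    (Real.continuous_sin.tendsto _).comp hΩt
  have hC : Tendsto (fun N : ℕ =>
      1 - Real.sin (Ω + t N) / ((Ω + t N) * (Real.sin (t N) / t N))) atTop
      (nhds (1 - Real.sin (Ω + 0) / ((Ω + 0) * 1))) := by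
    refine tendsto_const_nhds.sub (hsin.div (hΩt.mul hq) ?_)
    have : Ω + 0 = Ω := add_zero Ω
    rw [this]
    simpa using hΩ.ne'
  have hE := (hA.mul hB).mul hC
  have hval : σ2 * ((2 + 0) / 4) * (2 / 1) ^ 2 * (1 - Real.sin (Ω + 0) / ((Ω + 0) * 1))
      = 2 * σ2 * (1 - Real.sin Ω / Ω) := by
    rw [add_zero]
    ring
  rw [hval] at hE
  refine hE.congr' ?_
  filter_upwards [eventually_ge_atTop 1, hsinpos, htpos] with N hN hsN htN0
  have hNR : (0:ℝ) < N := by exact_mod_cast Nat.pos_of_ne_zero (by omega)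
  have hN0 : (N:ℝ) ≠ 0 := hNR.ne'
  have h2N1 : (2 * (N:ℝ) + 1) ≠ 0 := by positivity
  have hΩt0 : Ω + t N ≠ 0 := by positivity
  have harg1 : (Ω / N) / 2 = t N := by
    simp only [ht_def]; rw [div_div, mul_comm]
  have harg2 : ((N:ℝ) + 1 / 2) * (Ω / N) = Ω + t N := by
    simp only [ht_def]; field_simp
  have hΩN : Ω / N = 2 * t N := by
    simp only [ht_def]; field_simp
  have hrel2 : Ω + t N = (2 * (N:ℝ) + 1) * t N := by
    simp only [ht_def]; field_simp
  rw [hS, harg1, harg2, hΩN, hrel2]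
  have hs : Real.sin (t N) ≠ 0 := hsN.ne'
  have ht0 : t N ≠ 0 := htN0.ne'
  generalize Real.sin ((2 * (N:ℝ) + 1) * t N) = s2
  field_simp
end

section
/- Let N be a positive integer and let ε_1 ≤ ... ≤ ε_N be random variables (with ε_0 = 0) such that ⟨(ε_ℓ − ε_m)^q⟩ = ⟨ε_{ℓ−m}^q⟩ for all ℓ > m and q ∈ {1,2}. Then the covariance of the spacings s_ℓ = ε_ℓ − ε_{ℓ−1}, cov(s_ℓ, s_m), depends only on |ℓ−m|. -/
open MeasureTheory Finset

/-- Converse direction of the stationarity lemma: if the first and second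
moments of eigenlevel differences are translation invariant in the index,
`⟨(ε ℓ - ε m)^q⟩ = ⟨ε (ℓ-m) ^ q⟩` for `ℓ > m` and `q ∈ {1,2}`, then the spacing
covariance matrix is Toeplitz: `cov(s ℓ, s m) = I_{|ℓ-m|} - Δ²` for some function `I`,
with `Δ = ⟨ε 1⟩`; in particular `cov(s ℓ, s m)` depends only on `|ℓ - m|`. -/
theorem translation_invariant_moments_imply_toeplitz_covariance
    {Ω : Type*} [MeasureSpace Ω] [IsProbabilityMeasure (volume : Measure Ω)]
    (N : ℕ) (hN : 1 ≤ N)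
    (ε : ℕ → Ω → ℝ) (hε0 : ∀ ω, ε 0 ω = 0)
    (hord : ∀ ω : Ω, ∀ ℓ ∈ Icc 1 N, ∀ m ∈ Icc 1 N, ℓ ≤ m → ε ℓ ω ≤ ε m ω)
    (hint1 : ∀ ℓ, ℓ ≤ N → Integrable (ε ℓ))
    (hint2 : ∀ ℓ m, ℓ ≤ N → m ≤ N → Integrable (fun ω => ε ℓ ω * ε m ω))
    (hstat : ∀ ℓ ∈ Icc 1 N, ∀ m ∈ Icc 1 N, m < ℓ → ∀ q ∈ ({1, 2} : Finset ℕ),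
      ∫ ω, (ε ℓ ω - ε m ω) ^ q = ∫ ω, (ε (ℓ - m) ω) ^ q)
    (s : ℕ → Ω → ℝ) (hs : ∀ ℓ ω, s ℓ ω = ε ℓ ω - ε (ℓ - 1) ω)
    (Δ : ℝ) (hΔ : Δ = ∫ ω, ε 1 ω) :
    ∃ I : ℕ → ℝ, ∀ ℓ ∈ Icc 1 N, ∀ m ∈ Icc 1 N,
      ∫ ω, (s ℓ ω - Δ) * (s m ω - Δ) = I (Nat.dist ℓ m) - Δ ^ 2 := by
  classical
  set F : ℕ → ℝ := fun n => ∫ ω, (ε n ω) ^ 2 with hFdef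
  have hF0 : F 0 = 0 := by simp [hFdef, hε0]
  -- product of two eigenlevels, ordered case
  have hPle : ∀ m ℓ, m ≤ ℓ → ℓ ≤ N →
      ∫ ω, ε ℓ ω * ε m ω = (F ℓ + F m - F (ℓ - m)) / 2 := by
    intro m ℓ hml hℓN
    rcases Nat.eq_zero_or_pos m with hm0 | hm1
    · subst hm0
      simp [hε0, hF0]
    rcases eq_or_lt_of_le hml with heq | hlt
    · subst heq
      have h1 : (∫ ω, ε m ω * ε m ω) = F m := by
        simp [hFdef, pow_two]
      rw [h1]
      simp [hF0]
    · have hℓ1 : 1 ≤ ℓ := le_trans hm1 (le_of_lt hlt)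
      have hmN : m ≤ N := le_trans hml hℓN
      have hq := hstat ℓ (mem_Icc.mpr ⟨hℓ1, hℓN⟩) m (mem_Icc.mpr ⟨hm1, hmN⟩) hlt 2
        (by simp)
      have e1 : (fun ω => (ε ℓ ω - ε m ω) ^ 2) =
          fun ω => (ε ℓ ω * ε ℓ ω - ε ℓ ω * ε m ω) - (ε m ω * ε ℓ ω - ε m ω * ε m ω) := by
        funext ω; ring
      rw [e1] at hq
      have iA : Integrable (fun ω => ε ℓ ω * ε ℓ ω - ε ℓ ω * ε m ω) :=
        (hint2 ℓ ℓ hℓN hℓN).sub (hint2 ℓ m hℓN hmN)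
      have iB : Integrable (fun ω => ε m ω * ε ℓ ω - ε m ω * ε m ω) :=
        (hint2 m ℓ hmN hℓN).sub (hint2 m m hmN hmN)
      rw [integral_sub iA iB,
        integral_sub (hint2 ℓ ℓ hℓN hℓN) (hint2 ℓ m hℓN hmN),
        integral_sub (hint2 m ℓ hmN hℓN) (hint2 m m hmN hmN)] at hq
      have hsym : (∫ ω, ε m ω * ε ℓ ω) = ∫ ω, ε ℓ ω * ε m ω := by
        apply integral_congr_ae
        filter_upwards with ω using mul_comm _ _
      have hFℓ : (∫ ω, ε ℓ ω * ε ℓ ω) = F ℓ := by simp [hFdef, pow_two]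
      have hFm : (∫ ω, ε m ω * ε m ω) = F m := by simp [hFdef, pow_two]
      have hFd : (∫ ω, (ε (ℓ - m) ω) ^ 2) = F (ℓ - m) := rfl
      rw [hsym, hFℓ, hFm, hFd] at hq
      linarith
  -- symmetric version with Nat.dist
  have hQ : ∀ ℓ m, ℓ ≤ N → m ≤ N →
      ∫ ω, ε ℓ ω * ε m ω = (F ℓ + F m - F (Nat.dist ℓ m)) / 2 := by
    intro ℓ m hℓN hmN
    rcases le_total m ℓ with h | h
    · rw [hPle m ℓ h hℓN, Nat.dist_eq_sub_of_le_right h]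
    · have := hPle ℓ m h hmN
      have hsym : (∫ ω, ε ℓ ω * ε m ω) = ∫ ω, ε m ω * ε ℓ ω := by
        apply integral_congr_ae
        filter_upwards with ω using mul_comm _ _
      rw [hsym, this, Nat.dist_eq_sub_of_le h]
      ring
  -- the Toeplitz function
  set C : ℕ → ℝ := fun d => if d = 0 then F 1 else (F (d + 1) + F (d - 1) - 2 * F d) / 2
    with hCdef
  -- spacing product integrals
  have hscov : ∀ ℓ m, 1 ≤ ℓ → ℓ ≤ N → 1 ≤ m → m ≤ N → m ≤ ℓ →
      ∫ ω, s ℓ ω * s m ω = C (Nat.dist ℓ m) := by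
    intro ℓ m hℓ1 hℓN hm1 hmN hml
    have hℓ'N : ℓ - 1 ≤ N := le_trans (Nat.sub_le _ _) hℓN
    have hm'N : m - 1 ≤ N := le_trans (Nat.sub_le _ _) hmN
    have e1 : (fun ω => s ℓ ω * s m ω) =
        fun ω => (ε ℓ ω * ε m ω - ε ℓ ω * ε (m - 1) ω) -
          (ε (ℓ - 1) ω * ε m ω - ε (ℓ - 1) ω * ε (m - 1) ω) := by
      funext ω; rw [hs]; rw [hs]; ring
    have iA : Integrable (fun ω => ε ℓ ω * ε m ω - ε ℓ ω * ε (m - 1) ω) :=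
      (hint2 ℓ m hℓN hmN).sub (hint2 ℓ (m - 1) hℓN hm'N)
    have iB : Integrable (fun ω => ε (ℓ - 1) ω * ε m ω - ε (ℓ - 1) ω * ε (m - 1) ω) :=
      (hint2 (ℓ - 1) m hℓ'N hmN).sub (hint2 (ℓ - 1) (m - 1) hℓ'N hm'N)
    rw [e1, integral_sub iA iB,
      integral_sub (hint2 ℓ m hℓN hmN) (hint2 ℓ (m - 1) hℓN hm'N),
      integral_sub (hint2 (ℓ - 1) m hℓ'N hmN) (hint2 (ℓ - 1) (m - 1) hℓ'N hm'N),
      hQ ℓ m hℓN hmN, hQ ℓ (m - 1) hℓN hm'N, hQ (ℓ - 1) m hℓ'N hmN,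
      hQ (ℓ - 1) (m - 1) hℓ'N hm'N]
    have hdist : ∀ a b : ℕ, Nat.dist a b = a - b + (b - a) := fun a b => rfl
    rcases eq_or_lt_of_le hml with heq | hlt
    · subst heq
      have d1 : Nat.dist m m = 0 := by simp [hdist]
      have d2 : Nat.dist m (m - 1) = 1 := by simp [hdist]; omega
      have d3 : Nat.dist (m - 1) m = 1 := by simp [hdist]; omega
      rw [d1, d2, d3, hCdef]
      simp [hF0]
      ring
    · have hd0 : Nat.dist ℓ m ≠ 0 := by simp [hdist]; omega
      have d2 : Nat.dist ℓ (m - 1) = Nat.dist ℓ m + 1 := by simp [hdist]; omega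
      have d3 : Nat.dist (ℓ - 1) m = Nat.dist ℓ m - 1 := by simp [hdist]; omega
      have d4 : Nat.dist (ℓ - 1) (m - 1) = Nat.dist ℓ m := by simp [hdist]; omega
      rw [d2, d3, d4, hCdef]
      simp only [hd0, if_false]
      ring
  -- symmetric version
  have hscov' : ∀ ℓ m, 1 ≤ ℓ → ℓ ≤ N → 1 ≤ m → m ≤ N →
      ∫ ω, s ℓ ω * s m ω = C (Nat.dist ℓ m) := by
    intro ℓ m hℓ1 hℓN hm1 hmN
    rcases le_total m ℓ with h | h
    · exact hscov ℓ m hℓ1 hℓN hm1 hmN h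
    · have hsym : (∫ ω, s ℓ ω * s m ω) = ∫ ω, s m ω * s ℓ ω := by
        apply integral_congr_ae
        filter_upwards with ω using mul_comm _ _
      rw [hsym, hscov m ℓ hm1 hmN hℓ1 hℓN h, Nat.dist_comm]
  -- means
  have hmean : ∀ ℓ, 1 ≤ ℓ → ℓ ≤ N → ∫ ω, s ℓ ω = Δ := by
    intro ℓ hℓ1 hℓN
    rcases eq_or_lt_of_le hℓ1 with heq | hlt
    · subst heq
      have : (fun ω => s 1 ω) = ε 1 := by funext ω; rw [hs]; simp [hε0]
      rw [this, hΔ]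
    · have hℓ'1 : 1 ≤ ℓ - 1 := by omega
      have hℓ'N : ℓ - 1 ≤ N := le_trans (Nat.sub_le _ _) hℓN
      have hq := hstat ℓ (mem_Icc.mpr ⟨hℓ1, hℓN⟩) (ℓ - 1) (mem_Icc.mpr ⟨hℓ'1, hℓ'N⟩)
        (by omega) 1 (by simp)
      have hsub : ℓ - (ℓ - 1) = 1 := by omega
      rw [hsub] at hq
      simp only [pow_one] at hq
      calc ∫ ω, s ℓ ω = ∫ ω, ε ℓ ω - ε (ℓ - 1) ω := by
            apply integral_congr_ae; filter_upwards with ω using hs ℓ ω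
        _ = Δ := by rw [hq, hΔ]
  -- integrability of spacings and their products
  have hsint : ∀ ℓ, ℓ ≤ N → Integrable (s ℓ) := by
    intro ℓ hℓN
    have : s ℓ = fun ω => ε ℓ ω - ε (ℓ - 1) ω := by funext ω; exact hs ℓ ω
    rw [this]
    exact (hint1 ℓ hℓN).sub (hint1 (ℓ - 1) (le_trans (Nat.sub_le _ _) hℓN))
  have hsint2 : ∀ ℓ m, ℓ ≤ N → m ≤ N → Integrable (fun ω => s ℓ ω * s m ω) := by
    intro ℓ m hℓN hmN
    have hℓ'N : ℓ - 1 ≤ N := le_trans (Nat.sub_le _ _) hℓN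
    have hm'N : m - 1 ≤ N := le_trans (Nat.sub_le _ _) hmN
    have e1 : (fun ω => s ℓ ω * s m ω) =
        fun ω => (ε ℓ ω * ε m ω - ε ℓ ω * ε (m - 1) ω) -
          (ε (ℓ - 1) ω * ε m ω - ε (ℓ - 1) ω * ε (m - 1) ω) := by
      funext ω; rw [hs]; rw [hs]; ring
    rw [e1]
    exact ((hint2 ℓ m hℓN hmN).sub (hint2 ℓ (m - 1) hℓN hm'N)).sub
      ((hint2 (ℓ - 1) m hℓ'N hmN).sub (hint2 (ℓ - 1) (m - 1) hℓ'N hm'N))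
  refine ⟨C, ?_⟩
  intro ℓ hℓ m hm
  obtain ⟨hℓ1, hℓN⟩ := mem_Icc.mp hℓ
  obtain ⟨hm1, hmN⟩ := mem_Icc.mp hm
  have e1 : (fun ω => (s ℓ ω - Δ) * (s m ω - Δ)) =
      fun ω => (s ℓ ω * s m ω - Δ * s ℓ ω) - (Δ * s m ω - Δ * Δ) := by
    funext ω; ring
  have iA : Integrable (fun ω => s ℓ ω * s m ω - Δ * s ℓ ω) :=
    (hsint2 ℓ m hℓN hmN).sub ((hsint ℓ hℓN).const_mul Δ)
  have iB : Integrable (fun ω => Δ * s m ω - Δ * Δ) :=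
    ((hsint m hmN).const_mul Δ).sub (integrable_const _)
  rw [e1, integral_sub iA iB,
    integral_sub (hsint2 ℓ m hℓN hmN) ((hsint ℓ hℓN).const_mul Δ),
    integral_sub ((hsint m hmN).const_mul Δ) (integrable_const _),
    integral_const_mul, integral_const_mul, hmean ℓ hℓ1 hℓN, hmean m hm1 hmN,
    hscov' ℓ m hℓ1 hℓN hm1 hmN]
  simp
  ring
end

section
/- Let N be a positive integer and z a complex number with |z| = 1, z ≠ 1. Then (1/N) · Re[ (z d/dz − N − (1−z^{-N})/(1−z)) Σ_{ℓ=1}^N ℓ² z^ℓ ] = (1/N) · | (1 − (N+1)z^N + N z^{N+1}) / (1−z)² |². -/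
/-!
Put `w = z̄ = z⁻¹` and `Sₖ(z) = ∑_{ℓ=1}^N ℓᵏ zˡ`. Then `(1 - z^{-N}) / (1 - z) = -S₀(w)` and the
fraction on the right is `S₁(z) / z`, so the claim is `Re E(z, w) = |S₁(z)|²` for
`E(z, w) = S₃(z) - N S₂(z) + S₀(w) S₂(z)`. In any commutative ring with `z w = 1` one has
`E(z, w) + E(w, z) = 2 S₁(z) S₁(w)`, by induction on `N`; on the unit circle the two sides are
`2 Re E(z, z̄)` and `2 |S₁(z)|²`.
-/

open Finset ComplexConjugate

def momentSum {R : Type*} [CommRing R] (k N : ℕ) (z : R) : R :=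
  ∑ ℓ ∈ Icc 1 N, (ℓ : R) ^ k * z ^ ℓ

/-- `(z d/dz - N - (1 - z^{-N}) / (1 - z)) ∑_{ℓ=1}^N ℓ² zˡ`, with `w` in the role of `z⁻¹`. -/
def eulerOperatorSum {R : Type*} [CommRing R] (N : ℕ) (z w : R) : R :=
  momentSum 3 N z - N * momentSum 2 N z + momentSum 0 N w * momentSum 2 N z

section CommRing

variable {R : Type*} [CommRing R]

lemma momentSum_succ (k n : ℕ) (z : R) :
    momentSum k (n + 1) z = momentSum k n z + ((n : R) + 1) ^ k * z ^ (n + 1) := by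
  rw [momentSum, momentSum, sum_Icc_succ_top (by omega)]
  push_cast
  rfl

lemma map_momentSum {S : Type*} [CommRing S] (f : R →+* S) (k N : ℕ) (z : R) :
    f (momentSum k N z) = momentSum k N (f z) := by
  simp [momentSum]

lemma map_eulerOperatorSum {S : Type*} [CommRing S] (f : R →+* S) (N : ℕ) (z w : R) :
    f (eulerOperatorSum N z w) = eulerOperatorSum N (f z) (f w) := by
  simp only [eulerOperatorSum, map_add, map_sub, map_mul, map_natCast, map_momentSum]

lemma pow_succ_mul_sum_Icc_reflect {z w : R} (h : z * w = 1) (n : ℕ) (f : ℕ → R) :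
    z ^ (n + 1) * ∑ m ∈ Icc 1 n, f m * w ^ m = ∑ m ∈ Icc 1 n, f (n + 1 - m) * z ^ m := by
  rw [mul_sum]
  refine sum_nbij' (fun m => n + 1 - m) (fun m => n + 1 - m) ?_ ?_ ?_ ?_ ?_ <;>
    intro m hm <;> simp only [mem_Icc] at hm ⊢
  any_goals omega
  have hzm : z ^ (n + 1) = z ^ (n + 1 - m) * z ^ m := by
    rw [← pow_add, Nat.sub_add_cancel (by omega)]
  have hzw : z ^ m * w ^ m = 1 := by rw [← mul_pow, h, one_pow]
  rw [Nat.sub_sub_self (by omega), hzm]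
  linear_combination (f m * z ^ (n + 1 - m)) * hzw

/-- The bracket is `∑ (m - (n + 1))² wᵐ`, which the reflection `m ↦ n + 1 - m` sends to `∑ m² zᵐ`. -/
lemma pow_succ_mul_momentSum_reflect {z w : R} (h : z * w = 1) (n : ℕ) :
    z ^ (n + 1) * (momentSum 2 n w - 2 * ((n : R) + 1) * momentSum 1 n w
      + ((n : R) + 1) ^ 2 * momentSum 0 n w) = momentSum 2 n z := by
  have hsq : momentSum 2 n w - 2 * ((n : R) + 1) * momentSum 1 n w
      + ((n : R) + 1) ^ 2 * momentSum 0 n w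
      = ∑ m ∈ Icc 1 n, ((m : R) - (n + 1)) ^ 2 * w ^ m := by
    simp only [momentSum, mul_sum, ← sum_sub_distrib, ← sum_add_distrib]
    exact sum_congr rfl fun m _ => by ring
  rw [hsq, pow_succ_mul_sum_Icc_reflect h]
  refine sum_congr rfl fun m hm => ?_
  rw [Nat.cast_sub (by simp only [mem_Icc] at hm; omega)]
  push_cast
  ring

lemma one_sub_mul_momentSum_zero {z w : R} (h : z * w = 1) (N : ℕ) :
    (1 - z) * momentSum 0 N w = w ^ N - 1 := by
  induction N with
  | zero => simp [momentSum]
  | succ n ih =>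
    rw [momentSum_succ]
    linear_combination ih - w ^ n * h

lemma sq_one_sub_mul_momentSum_one (z : R) (N : ℕ) :
    (1 - z) ^ 2 * momentSum 1 N z = z * (1 - ((N : R) + 1) * z ^ N + N * z ^ (N + 1)) := by
  induction N with
  | zero => simp [momentSum]
  | succ n ih =>
    rw [momentSum_succ]
    push_cast
    linear_combination ih

/-- In the step `n → n + 1` the new cubic terms cancel against the growth of the factor `N`;
what is left is `pow_succ_mul_momentSum_reflect` at `(z, w)` and at `(w, z)`. -/
theorem eulerOperatorSum_add_swap {z w : R} (h : z * w = 1) (N : ℕ) :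
    eulerOperatorSum N z w + eulerOperatorSum N w z
      = 2 * (momentSum 1 N z * momentSum 1 N w) := by
  unfold eulerOperatorSum
  induction N with
  | zero => simp [momentSum]
  | succ n ih =>
    simp only [momentSum_succ]
    push_cast
    linear_combination ih + pow_succ_mul_momentSum_reflect h n
      + pow_succ_mul_momentSum_reflect (mul_comm z w ▸ h) n

end CommRing

theorem RCLike.re_eulerOperatorSum_conj {K : Type*} [RCLike K] {z : K} (hz : ‖z‖ = 1) (N : ℕ) :
    re (eulerOperatorSum N z (conj z)) = ‖momentSum 1 N z‖ ^ 2 := by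
  have hzw : z * conj z = 1 := by rw [mul_conj, hz]; simp
  have hswap : eulerOperatorSum N (conj z) z = conj (eulerOperatorSum N z (conj z)) := by
    rw [map_eulerOperatorSum, conj_conj]
  have key := eulerOperatorSum_add_swap hzw N
  rw [hswap, add_conj, ← map_momentSum (starRingEnd K) 1, mul_conj] at key
  exact_mod_cast mul_left_cancel₀ two_ne_zero key

theorem euler_operator_geometric_identity_general
    (N : ℕ) (z : ℂ) (hz : ‖z‖ = 1) (hz1 : z ≠ 1) :
    (1 / N : ℝ) *
        ((∑ ℓ ∈ Icc 1 N, (ℓ : ℂ) ^ 3 * z ^ ℓ)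
          - (N : ℂ) * ∑ ℓ ∈ Icc 1 N, (ℓ : ℂ) ^ 2 * z ^ ℓ
          - ((1 - z ^ (-(N : ℤ))) / (1 - z)) * ∑ ℓ ∈ Icc 1 N, (ℓ : ℂ) ^ 2 * z ^ ℓ).re
      = (1 / N : ℝ) *
          ‖(1 - ((N : ℂ) + 1) * z ^ N + (N : ℂ) * z ^ (N + 1)) / (1 - z) ^ 2‖ ^ 2 := by
  have hz0 : z ≠ 0 := norm_ne_zero_iff.mp (by rw [hz]; exact one_ne_zero)
  have h1z : 1 - z ≠ 0 := sub_ne_zero.mpr hz1.symm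
  have hzw : z * conj z = 1 := by rw [Complex.mul_conj', hz]; simp
  have hquot : (1 - z ^ (-(N : ℤ))) / (1 - z) = -momentSum 0 N (conj z) := by
    rw [div_eq_iff h1z, zpow_neg, zpow_natCast, ← inv_pow, Complex.inv_eq_conj hz]
    linear_combination one_sub_mul_momentSum_zero hzw N
  have hfrac : (1 - ((N : ℂ) + 1) * z ^ N + (N : ℂ) * z ^ (N + 1)) / (1 - z) ^ 2
      = momentSum 1 N z / z := by
    rw [div_eq_div_iff (pow_ne_zero 2 h1z) hz0]
    linear_combination -sq_one_sub_mul_momentSum_one z N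
  rw [hquot, hfrac, norm_div, hz, div_one, ← RCLike.re_eulerOperatorSum_conj hz N,
    RCLike.re_to_complex]
  congr 2
  unfold eulerOperatorSum momentSum
  ring

/-- For `|z| = 1`, `z ≠ 1`, the Euler-operator identity
`(1/N) Re[(z d/dz - N - (1-z^{-N})/(1-z)) Σ_{ℓ=1}^N ℓ² z^ℓ]
  = (1/N) |(1-(N+1)z^N+Nz^{N+1})/(1-z)²|²`,
where `z d/dz Σ ℓ² z^ℓ = Σ ℓ³ z^ℓ`. -/
theorem euler_operator_geometric_identity
    (N : ℕ) (hN : 1 ≤ N) (z : ℂ) (hz : ‖z‖ = 1) (hz1 : z ≠ 1) :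
    (1 / N : ℝ) *
        ((∑ ℓ ∈ Icc 1 N, (ℓ : ℂ) ^ 3 * z ^ ℓ)
          - (N : ℂ) * ∑ ℓ ∈ Icc 1 N, (ℓ : ℂ) ^ 2 * z ^ ℓ
          - ((1 - z ^ (-(N : ℤ))) / (1 - z)) * ∑ ℓ ∈ Icc 1 N, (ℓ : ℂ) ^ 2 * z ^ ℓ).re
      = (1 / N : ℝ) *
          ‖(1 - ((N : ℂ) + 1) * z ^ N + (N : ℂ) * z ^ (N + 1)) / (1 - z) ^ 2‖ ^ 2 :=
  euler_operator_geometric_identity_general N z hz hz1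
end

section
/- For TCUE_N, the ordered eigen-angles θ_1 ≤ ... ≤ θ_N satisfy the index-translation invariance ⟨(θ_ℓ − θ_m)^q⟩ = ⟨θ_{ℓ−m}^q⟩ for all 1 ≤ m < ℓ ≤ N and every nonnegative integer q. -/
open MeasureTheory Finset Real

open scoped Classical in
/-- Ordered TCUE joint density (including the `∏ dθ_j/(2π)` normalization):
`P^(ord)_N(θ) = (1/(N+1)) ∏_{i<j}|e^{iθ_i}-e^{iθ_j}|² ∏_j |1-e^{iθ_j}|²`
on the simplex `0 ≤ θ_1 ≤ ⋯ ≤ θ_N ≤ 2π`, with `N = n+1`. -/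
noncomputable def tcueOrderedDensity (n : ℕ) (θ : Fin (n + 1) → ℝ) : ℝ :=
  if (∀ i j : Fin (n + 1), i ≤ j → θ i ≤ θ j) ∧ (∀ i, θ i ∈ Set.Icc 0 (2 * π)) then
    (1 / (2 * π)) ^ (n + 1) * (1 / (n + 2) : ℝ) *
      (∏ i : Fin (n + 1), ∏ j : Fin (n + 1),
        if i < j then
          ‖Complex.exp (Complex.I * θ i) - Complex.exp (Complex.I * θ j)‖ ^ 2
        else 1) *
      ∏ j : Fin (n + 1), ‖1 - Complex.exp (Complex.I * θ j)‖ ^ 2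
  else 0

/-!
Prepend the fixed eigenvalue `1` as a point at angle `0`. The TCUE density is then the
`CUE_{N+1}` density `∏_{k<l} |z_k - z_l|²` of the `N + 1` points `z_k = e^{iφ_k}`, restricted to
angles `0 = φ_0 ≤ φ_1 ≤ ⋯ ≤ φ_N ≤ 2π`, i.e. to nonnegative cyclic gaps `φ_{k+1} - φ_k`
(with `φ_{N+1} = φ_0 + 2π`).
Measuring all angles from the point `θ_m` instead of from `1` and relabelling cyclically permutes
the points and multiplies them by the unimodular `e^{-iθ_m}`, and it permutes the cyclic gaps;
so the density is invariant. This change of variables is affine, and its linear part has finite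
order (the shifts form a representation of `ℤ/(N+1)`), so it preserves Lebesgue measure. It
sends `θ_ℓ - θ_m` to the `(ℓ - m)`-th new angle.
-/

section FiniteOrder

variable {E : Type*} [NormedAddCommGroup E] [NormedSpace ℝ E] [MeasurableSpace E] [BorelSpace E]
  [FiniteDimensional ℝ E] {f : E →ₗ[ℝ] E} {m : ℕ}

theorem LinearMap.measurableEmbedding_of_pow_eq_one (hm : m ≠ 0) (hf : f ^ m = 1) :
    MeasurableEmbedding f :=
  (LinearMap.isClosedEmbedding_of_injective <| LinearMap.ker_eq_bot.mpr
    ((Module.End.isUnit_iff f).mp (IsUnit.of_pow_eq_one hf hm)).1).measurableEmbedding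

theorem LinearMap.measurePreserving_of_pow_eq_one (μ : Measure E) [μ.IsAddHaarMeasure]
    (hm : m ≠ 0) (hf : f ^ m = 1) : MeasurePreserving f μ μ := by
  have hdet : |LinearMap.det f| = 1 := by
    rw [← pow_eq_one_iff_of_nonneg (abs_nonneg _) hm, pow_abs, ← map_pow, hf, map_one, abs_one]
  refine ⟨f.continuous_of_finiteDimensional.measurable, ?_⟩
  rw [Measure.map_linearMap_addHaar_eq_smul_addHaar μ (by simp [← abs_ne_zero, hdet]), abs_inv,
    hdet, inv_one, ENNReal.ofReal_one, one_smul]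

end FiniteOrder

section PairProduct

variable {N : ℕ}

noncomputable def pairDistSqProd (w : Fin N → ℂ) : ℝ :=
  ∏ k, ∏ l, if k < l then ‖w k - w l‖ ^ 2 else 1

lemma pairDistSqProd_nonneg (w : Fin N → ℂ) : 0 ≤ pairDistSqProd w :=
  prod_nonneg fun _ _ => prod_nonneg fun _ _ => by split_ifs <;> positivity

lemma pairDistSqProd_sq (w : Fin N → ℂ) :
    pairDistSqProd w ^ 2 = ∏ k, ∏ l, if k ≠ l then ‖w k - w l‖ ^ 2 else 1 := by
  rw [pairDistSqProd, sq]
  nth_rewrite 2 [prod_comm]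
  simp_rw [← prod_mul_distrib]
  refine prod_congr rfl fun k _ => prod_congr rfl fun l _ => ?_
  rcases lt_trichotomy k l with h | rfl | h
  · simp [h, h.not_gt, h.ne]
  · simp
  · simp [h, h.not_gt, h.ne', norm_sub_rev (w k)]

lemma pairDistSqProd_comp_perm (w : Fin N → ℂ) (σ : Equiv.Perm (Fin N)) :
    pairDistSqProd (w ∘ σ) = pairDistSqProd w := by
  refine (pow_left_inj₀ (pairDistSqProd_nonneg _) (pairDistSqProd_nonneg w) two_ne_zero).mp ?_
  rw [pairDistSqProd_sq, pairDistSqProd_sq]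
  exact Fintype.prod_equiv σ _ _ fun k => Fintype.prod_equiv σ _ _ fun l => by
    simp [σ.injective.ne_iff]

lemma pairDistSqProd_const_mul (w : Fin N → ℂ) {c : ℂ} (hc : ‖c‖ = 1) :
    pairDistSqProd (fun k => c * w k) = pairDistSqProd w := by
  simp only [pairDistSqProd, ← mul_sub, norm_mul, hc, one_mul]

end PairProduct

namespace TCUE

section Rotation

variable {m : ℕ}

/-- The angles of the points `e^{iφ_k}` measured from the point `s`, relabelled cyclically so that
`s` becomes point `0`; `2π` is added where the index `k + s` wraps around. -/
noncomputable def rotate (s : Fin (m + 1)) (φ : Fin (m + 1) → ℝ) (k : Fin (m + 1)) : ℝ :=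
  φ (k + s) - φ s + if m + 1 ≤ k.val + s.val then 2 * π else 0

noncomputable def cyclicGap (φ : Fin (m + 1) → ℝ) (k : Fin (m + 1)) : ℝ :=
  φ (k + 1) - φ k + if k = Fin.last m then 2 * π else 0

lemma cyclicGap_rotate (s : Fin (m + 1)) (φ : Fin (m + 1) → ℝ) (k : Fin (m + 1)) :
    cyclicGap (rotate s φ) k = cyclicGap φ (k + s) := by
  have hk := k.isLt
  have hs := s.isLt
  have hk1 := Fin.val_add_one k
  have hks := Fin.val_add_eq_ite k s
  have hk1s := Fin.val_add_eq_ite (k + 1) s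
  simp only [Fin.ext_iff, Fin.val_last] at hk1
  simp only [cyclicGap, rotate, add_right_comm k 1 s, Fin.ext_iff, Fin.val_last]
  split_ifs at hk1 hks hk1s ⊢ <;> first | omega | ring

lemma forall_cyclicGap_rotate_nonneg_iff (s : Fin (m + 1)) (φ : Fin (m + 1) → ℝ) :
    (∀ k, 0 ≤ cyclicGap (rotate s φ) k) ↔ ∀ k, 0 ≤ cyclicGap φ k := by
  simp_rw [cyclicGap_rotate]
  exact ⟨fun h k => by simpa using h (k - s), fun h k => h _⟩

lemma forall_cyclicGap_nonneg_iff (φ : Fin (m + 1) → ℝ) :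
    (∀ k, 0 ≤ cyclicGap φ k) ↔ Monotone φ ∧ φ (Fin.last m) ≤ φ 0 + 2 * π := by
  rw [Fin.forall_fin_succ', Fin.monotone_iff_le_succ]
  simp only [cyclicGap, Fin.coeSucc_eq_succ, Fin.last_add_one, Fin.castSucc_ne_last, if_false,
    if_true, add_zero, sub_nonneg]
  constructor <;> rintro ⟨h1, h2⟩ <;> exact ⟨h1, by linarith⟩

lemma exp_I_mul_rotate (s : Fin (m + 1)) (φ : Fin (m + 1) → ℝ) (k : Fin (m + 1)) :
    Complex.exp (Complex.I * rotate s φ k)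
      = Complex.exp (-(Complex.I * φ s)) * Complex.exp (Complex.I * φ (k + s)) := by
  rw [← Complex.exp_add, rotate]
  split_ifs
  · rw [show Complex.I * ((φ (k + s) - φ s + 2 * π : ℝ) : ℂ)
        = -(Complex.I * φ s) + Complex.I * φ (k + s) + 2 * π * Complex.I by push_cast; ring,
      Complex.exp_add, Complex.exp_two_pi_mul_I, mul_one]
  · congr 1; push_cast; ring

lemma pairDistSqProd_exp_rotate (s : Fin (m + 1)) (φ : Fin (m + 1) → ℝ) :
    pairDistSqProd (fun k => Complex.exp (Complex.I * rotate s φ k))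
      = pairDistSqProd (fun k => Complex.exp (Complex.I * φ k)) := by
  simp_rw [exp_I_mul_rotate]
  rw [pairDistSqProd_const_mul _ (by simp [Complex.norm_exp])]
  exact pairDistSqProd_comp_perm (fun k => Complex.exp (Complex.I * φ k)) (Equiv.addRight s)

end Rotation

variable {n : ℕ}

/-- The angles with the fixed eigenvalue `1` prepended: the factor `∏_j |1 - e^{iθ_j}|²` of the
TCUE density is the Vandermonde factor of that extra point. -/
def extendAngles (θ : Fin (n + 1) → ℝ) : Fin (n + 2) → ℝ := Fin.cons 0 θ

@[simp] lemma extendAngles_apply_zero (θ : Fin (n + 1) → ℝ) : extendAngles θ 0 = 0 := rfl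

@[simp] lemma extendAngles_succ (θ : Fin (n + 1) → ℝ) (j : Fin (n + 1)) :
    extendAngles θ j.succ = θ j := rfl

@[simp] lemma extendAngles_zero : extendAngles (0 : Fin (n + 1) → ℝ) = 0 := by
  ext k; cases k using Fin.cases <;> rfl

lemma extendAngles_add (θ ψ : Fin (n + 1) → ℝ) :
    extendAngles (θ + ψ) = extendAngles θ + extendAngles ψ := by
  ext k; cases k using Fin.cases <;> simp

lemma extendAngles_smul (c : ℝ) (θ : Fin (n + 1) → ℝ) :
    extendAngles (c • θ) = c • extendAngles θ := by
  ext k; cases k using Fin.cases <;> simp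

lemma monotone_and_mem_Icc_iff_cyclicGap_nonneg (θ : Fin (n + 1) → ℝ) :
    ((∀ i j : Fin (n + 1), i ≤ j → θ i ≤ θ j) ∧ ∀ i, θ i ∈ Set.Icc 0 (2 * π)) ↔
      ∀ k, 0 ≤ cyclicGap (extendAngles θ) k := by
  rw [forall_cyclicGap_nonneg_iff, extendAngles, ← Matrix.vecCons, monotone_vecCons,
    ← Fin.succ_last]
  simp only [Matrix.cons_val_succ, Matrix.cons_val_zero, zero_add]
  constructor
  · rintro ⟨hmono, hIcc⟩
    exact ⟨⟨(hIcc 0).1, hmono⟩, (hIcc _).2⟩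
  · rintro ⟨⟨h0, hmono⟩, hlast⟩
    exact ⟨hmono, fun i =>
      ⟨h0.trans (hmono (Fin.zero_le i)), (hmono (Fin.le_last i)).trans hlast⟩⟩

lemma prod_mul_prod_eq_pairDistSqProd (θ : Fin (n + 1) → ℝ) :
    (∏ i : Fin (n + 1), ∏ j : Fin (n + 1),
        if i < j then ‖Complex.exp (Complex.I * θ i) - Complex.exp (Complex.I * θ j)‖ ^ 2
        else 1) * ∏ j : Fin (n + 1), ‖1 - Complex.exp (Complex.I * θ j)‖ ^ 2
      = pairDistSqProd fun k => Complex.exp (Complex.I * extendAngles θ k) := by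
  rw [pairDistSqProd, Fin.prod_univ_succ, mul_comm]
  simp [Fin.prod_univ_succ, Fin.succ_pos]

lemma tcueOrderedDensity_eq (θ : Fin (n + 1) → ℝ) :
    tcueOrderedDensity n θ = if ∀ k, 0 ≤ cyclicGap (extendAngles θ) k then
      (1 / (2 * π)) ^ (n + 1) * (1 / (n + 2) : ℝ) *
        pairDistSqProd (fun k => Complex.exp (Complex.I * extendAngles θ k))
      else 0 := by
  rw [tcueOrderedDensity, mul_assoc _ (∏ _, _), prod_mul_prod_eq_pairDistSqProd]
  simp only [monotone_and_mem_Icc_iff_cyclicGap_nonneg]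

def angleShift (s : Fin (n + 2)) : (Fin (n + 1) → ℝ) →ₗ[ℝ] (Fin (n + 1) → ℝ) where
  toFun θ j := extendAngles θ (j.succ + s) - extendAngles θ s
  map_add' θ ψ := by
    ext j
    simp only [extendAngles_add, Pi.add_apply]
    ring
  map_smul' c θ := by
    ext j
    simp only [extendAngles_smul, Pi.smul_apply, smul_eq_mul, RingHom.id_apply]
    ring

@[simp] lemma angleShift_apply (s : Fin (n + 2)) (θ : Fin (n + 1) → ℝ) (j : Fin (n + 1)) :
    angleShift s θ j = extendAngles θ (j.succ + s) - extendAngles θ s := rfl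

lemma extendAngles_angleShift (s : Fin (n + 2)) (θ : Fin (n + 1) → ℝ) (k : Fin (n + 2)) :
    extendAngles (angleShift s θ) k = extendAngles θ (k + s) - extendAngles θ s := by
  cases k using Fin.cases <;> simp

lemma angleShift_zero : angleShift (0 : Fin (n + 2)) = 1 :=
  LinearMap.ext fun θ => funext fun j => by simp

lemma angleShift_mul (s t : Fin (n + 2)) : angleShift s * angleShift t = angleShift (s + t) := by
  refine LinearMap.ext fun θ => funext fun j => ?_
  simp only [Module.End.mul_apply, angleShift_apply, extendAngles_angleShift, add_assoc]
  ring

lemma angleShift_pow (s : Fin (n + 2)) (m : ℕ) : angleShift s ^ m = angleShift (m • s) := by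
  induction m with
  | zero => rw [pow_zero, zero_smul, angleShift_zero]
  | succ m ih => rw [pow_succ, ih, angleShift_mul, succ_nsmul]

lemma angleShift_pow_card (s : Fin (n + 2)) : angleShift s ^ (n + 2) = 1 := by
  rw [angleShift_pow, show (n + 2) • s = 0 by simpa using card_nsmul_eq_zero (x := s),
    angleShift_zero]

noncomputable def rotateAngles (s : Fin (n + 2)) (θ : Fin (n + 1) → ℝ) (j : Fin (n + 1)) : ℝ :=
  rotate s (extendAngles θ) j.succ

lemma extendAngles_rotateAngles (s : Fin (n + 2)) (θ : Fin (n + 1) → ℝ) :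
    extendAngles (rotateAngles s θ) = rotate s (extendAngles θ) := by
  ext k
  cases k using Fin.cases
  · simp [rotate]
    omega
  · rfl

lemma rotateAngles_eq_angleShift_add (s : Fin (n + 2)) (θ : Fin (n + 1) → ℝ) :
    rotateAngles s θ = angleShift s θ + rotateAngles s 0 := by
  ext j
  simp [rotateAngles, rotate]

lemma measurePreserving_rotateAngles (s : Fin (n + 2)) : MeasurePreserving (rotateAngles s) := by
  rw [funext (rotateAngles_eq_angleShift_add s)]
  exact (measurePreserving_add_right volume _).comp
    (LinearMap.measurePreserving_of_pow_eq_one volume (by omega) (angleShift_pow_card s))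

lemma measurableEmbedding_rotateAngles (s : Fin (n + 2)) :
    MeasurableEmbedding (rotateAngles s) := by
  rw [funext (rotateAngles_eq_angleShift_add s)]
  exact (measurableEmbedding_addRight _).comp
    (LinearMap.measurableEmbedding_of_pow_eq_one (by omega) (angleShift_pow_card s))

lemma tcueOrderedDensity_rotateAngles (s : Fin (n + 2)) (θ : Fin (n + 1) → ℝ) :
    tcueOrderedDensity n (rotateAngles s θ) = tcueOrderedDensity n θ := by
  simp only [tcueOrderedDensity_eq, extendAngles_rotateAngles, forall_cyclicGap_rotate_nonneg_iff,
    pairDistSqProd_exp_rotate]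

lemma rotateAngles_succ_apply {a b j : Fin (n + 1)} (h : j.val + b.val + 1 = a.val)
    (θ : Fin (n + 1) → ℝ) : rotateAngles b.succ θ j = θ a - θ b := by
  have hsum : j.succ + b.succ = a.succ := by
    ext
    rw [Fin.val_add_eq_of_add_lt] <;> simp <;> omega
  rw [rotateAngles, rotate, hsum, if_neg (by simp; omega), add_zero, extendAngles_succ,
    extendAngles_succ]

end TCUE

/-- Indices are zero-based: `θ a` and `θ b` are the paper's `θ_ℓ` and `θ_m` with `ℓ = a + 1`,
`m = b + 1`. -/
theorem tcue_index_translation_invariance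
    (n : ℕ) (a b : Fin (n + 1)) (hab : b < a) (q : ℕ) :
    ∫ θ : Fin (n + 1) → ℝ, (θ a - θ b) ^ q * tcueOrderedDensity n θ
      = ∫ θ : Fin (n + 1) → ℝ,
          (θ ⟨a.val - b.val - 1, by omega⟩) ^ q * tcueOrderedDensity n θ := by
  symm
  rw [← (TCUE.measurePreserving_rotateAngles b.succ).integral_comp
    (TCUE.measurableEmbedding_rotateAngles b.succ)]
  congr 1 with θ
  rw [TCUE.rotateAngles_succ_apply (a := a) (j := ⟨a.val - b.val - 1, by omega⟩) (by simp; omega),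
    TCUE.tcueOrderedDensity_rotateAngles]
end
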